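/- arXiv:1810.01120 — 2 statements merged into one kernel-verified Lean document; each statement's English description precedes it below -/
import Mathlib

section
/- Let L be an e-cyclic residuated lattice and let H be a convex subalgebra of L. Then H^⊥ = ⋂{P : P is a minimal prime convex subalgebra of L with H ⊈ P}. -/
universe u

/-- A residuated lattice: a lattice-ordered monoid with left and right residuals.
`ldiv x z` is `x \ z` and `rdiv z y` is `z / y`. -/
class ResiduatedLattice (α : Type u) extends Lattice α, Monoid α where
  ldiv : α → α → α
  rdiv : α → α → α
  mul_le_iff_le_ldiv : ∀ x y z : α, x * y ≤ z ↔ y ≤ ldiv x z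
  mul_le_iff_le_rdiv : ∀ x y z : α, x * y ≤ z ↔ x ≤ rdiv z y

namespace ResiduatedLattice

variable {α : Type u} [ResiduatedLattice α]

/-- `L` is e-cyclic if `x \ e = e / x` for all `x`. -/
def ECyclic (α : Type u) [ResiduatedLattice α] : Prop :=
  ∀ x : α, ldiv x 1 = rdiv 1 x

/-- Absolute value: `|x| = x ⊓ (e / x) ⊓ e`. -/
def absv (x : α) : α := x ⊓ rdiv 1 x ⊓ 1

/-- A convex subalgebra: contains `e`, closed under all the operations, and order-convex. -/
structure IsConvexSubalgebra (H : Set α) : Prop where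
  one_mem : (1 : α) ∈ H
  mul_mem : ∀ ⦃x⦄, x ∈ H → ∀ ⦃y⦄, y ∈ H → x * y ∈ H
  sup_mem : ∀ ⦃x⦄, x ∈ H → ∀ ⦃y⦄, y ∈ H → x ⊔ y ∈ H
  inf_mem : ∀ ⦃x⦄, x ∈ H → ∀ ⦃y⦄, y ∈ H → x ⊓ y ∈ H
  ldiv_mem : ∀ ⦃x⦄, x ∈ H → ∀ ⦃y⦄, y ∈ H → ldiv x y ∈ H
  rdiv_mem : ∀ ⦃x⦄, x ∈ H → ∀ ⦃y⦄, y ∈ H → rdiv x y ∈ H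
  convex : ∀ ⦃a⦄, a ∈ H → ∀ ⦃b⦄, b ∈ H → ∀ ⦃x⦄, a ≤ x → x ≤ b → x ∈ H

/-- `C[S]`: the smallest convex subalgebra containing `S`. -/
def convexClosure (S : Set α) : Set α :=
  ⋂₀ {H : Set α | IsConvexSubalgebra H ∧ S ⊆ H}

end ResiduatedLattice

open ResiduatedLattice

/-- A prime convex subalgebra: a convex subalgebra that is meet-irreducible in the
lattice of convex subalgebras. -/
def IsPrimeConvex {α : Type u} [ResiduatedLattice α] (H : Set α) : Prop :=
  IsConvexSubalgebra H ∧
  ∀ X Y : Set α, IsConvexSubalgebra X → IsConvexSubalgebra Y →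
    X ∩ Y ⊆ H → X ⊆ H ∨ Y ⊆ H

/-- A minimal prime convex subalgebra. -/
def IsMinimalPrimeConvex {α : Type u} [ResiduatedLattice α] (P : Set α) : Prop :=
  IsPrimeConvex P ∧ P ≠ Set.univ ∧
  ∀ Q : Set α, IsPrimeConvex Q → Q ≠ Set.univ → Q ⊆ P → Q = P

/-- The polar `S^⊥ = {a : |a| ⊔ |s| = e for all s ∈ S}`. -/
def polar {α : Type u} [ResiduatedLattice α] (S : Set α) : Set α :=
  {a : α | ∀ s ∈ S, absv a ⊔ absv s = 1}

/-!
Write `C[S]` for the convex subalgebra generated by `S`. In an e-cyclic residuated lattice,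
`x ∈ C[S]` as soon as `|x|` lies above a finite product of elements `|s|`, `s ∈ S`: this set is
already a convex subalgebra, because a common lower bound `r` of `|x|` and `|y|` gives `r` or
`r * r` as a lower bound of the absolute value of every operation applied to `x, y`. For negative
`c, d, u` one has `(c ⊔ u) * (d ⊔ u) ≤ c * d ⊔ u`, so a product of `|a|`'s joined with a product of
`|b|`'s dominates the product of all joins `|a| ⊔ |b|`; hence `C[A] ∩ C[B] ⊆ K` whenever all
these joins lie in the convex subalgebra `K`.

With `K = P` prime, this shows that `|a| ⊔ |h| = e` forces `a ∈ P` or `h ∈ P`, which is the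
inclusion `H^⊥ ⊆ P` for every prime `P` missing `H`. With `K = M` a convex subalgebra maximal
among those avoiding `c = |a| ⊔ |h| ≠ e`, it shows that `M` is prime; by Zorn's lemma there is a
minimal prime `P ⊆ M`, still avoiding `c`. Then `P` contains neither `h` nor `a`, although it
misses `H`, which gives the reverse inclusion.
-/

namespace ResiduatedLattice

variable {α : Type u} [ResiduatedLattice α]

lemma le_ldiv_iff {x y z : α} : y ≤ ldiv x z ↔ x * y ≤ z := (mul_le_iff_le_ldiv x y z).symm

lemma le_rdiv_iff {x y z : α} : x ≤ rdiv z y ↔ x * y ≤ z := (mul_le_iff_le_rdiv x y z).symm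

instance : MulLeftMono α :=
  ⟨fun _ _ _ h => le_ldiv_iff.1 (h.trans (le_ldiv_iff.2 le_rfl))⟩

instance : MulRightMono α :=
  ⟨fun _ _ _ h => le_rdiv_iff.1 (h.trans (le_rdiv_iff.2 le_rfl))⟩

lemma mul_sup (a b c : α) : a * (b ⊔ c) = a * b ⊔ a * c :=
  le_antisymm (le_ldiv_iff.1 (sup_le (le_ldiv_iff.2 le_sup_left) (le_ldiv_iff.2 le_sup_right)))
    (sup_le (mul_le_mul_right le_sup_left a) (mul_le_mul_right le_sup_right a))

lemma sup_mul (a b c : α) : (a ⊔ b) * c = a * c ⊔ b * c :=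
  le_antisymm (le_rdiv_iff.1 (sup_le (le_rdiv_iff.2 le_sup_left) (le_rdiv_iff.2 le_sup_right)))
    (sup_le (mul_le_mul_left le_sup_left c) (mul_le_mul_left le_sup_right c))

lemma sup_mul_sup_le {c d u : α} (hc : c ≤ 1) (hd : d ≤ 1) (hu : u ≤ 1) :
    (c ⊔ u) * (d ⊔ u) ≤ c * d ⊔ u := by
  rw [sup_mul, mul_sup, mul_sup]
  refine sup_le (sup_le le_sup_left ?_) (sup_le ?_ ?_) <;> refine le_trans ?_ le_sup_right
  exacts [mul_le_of_le_one_left' hc, mul_le_of_le_one_right' hd, mul_le_of_le_one_right' hu]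

lemma ECyclic.mul_le_one_comm (hec : ECyclic α) {x y : α} : x * y ≤ 1 ↔ y * x ≤ 1 := by
  rw [← le_ldiv_iff, hec, le_rdiv_iff]

lemma absv_le_self (x : α) : absv x ≤ x := inf_le_left.trans inf_le_left

lemma absv_le_one (x : α) : absv x ≤ 1 := inf_le_right

lemma le_absv_iff {r x : α} : r ≤ absv x ↔ r ≤ x ∧ r * x ≤ 1 ∧ r ≤ 1 := by
  simp only [absv, le_inf_iff, le_rdiv_iff, and_assoc]

lemma absv_mul_le_one (x : α) : absv x * x ≤ 1 := (le_absv_iff.1 le_rfl).2.1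

lemma one_le_absv_one : (1 : α) ≤ absv 1 :=
  le_absv_iff.2 ⟨le_rfl, (one_mul 1).le, le_rfl⟩

section CommonLowerBound

variable {r x y : α} (hx : r ≤ absv x) (hy : r ≤ absv y)
include hx hy

lemma le_absv_sup : r ≤ absv (x ⊔ y) := by
  obtain ⟨hrx, hrx1, hr1⟩ := le_absv_iff.1 hx
  obtain ⟨-, hry1, -⟩ := le_absv_iff.1 hy
  exact le_absv_iff.2 ⟨hrx.trans le_sup_left, (mul_sup r x y).trans_le (sup_le hrx1 hry1), hr1⟩

lemma le_absv_inf : r ≤ absv (x ⊓ y) := by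
  obtain ⟨hrx, hrx1, hr1⟩ := le_absv_iff.1 hx
  obtain ⟨hry, -, -⟩ := le_absv_iff.1 hy
  exact le_absv_iff.2 ⟨le_inf hrx hry, (mul_le_mul_right inf_le_left r).trans hrx1, hr1⟩

lemma le_absv_of_le_of_le {z : α} (hxz : x ≤ z) (hzy : z ≤ y) : r ≤ absv z := by
  obtain ⟨hrx, -, hr1⟩ := le_absv_iff.1 hx
  obtain ⟨-, hry1, -⟩ := le_absv_iff.1 hy
  exact le_absv_iff.2 ⟨hrx.trans hxz, (mul_le_mul_right hzy r).trans hry1, hr1⟩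

lemma mul_self_le_absv_mul : r * r ≤ absv (x * y) := by
  obtain ⟨hrx, hrx1, hr1⟩ := le_absv_iff.1 hx
  obtain ⟨hry, hry1, -⟩ := le_absv_iff.1 hy
  refine le_absv_iff.2 ⟨mul_le_mul' hrx hry, ?_, mul_le_one' hr1 hr1⟩
  calc r * r * (x * y) = r * (r * x) * y := by simp only [mul_assoc]
    _ ≤ r * y := by simpa using mul_le_mul_left (mul_le_mul_right hrx1 r) y
    _ ≤ 1 := hry1

lemma mul_self_le_absv_ldiv (hec : ECyclic α) : r * r ≤ absv (ldiv x y) := by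
  obtain ⟨hrx, hrx1, hr1⟩ := le_absv_iff.1 hx
  obtain ⟨hry, hry1, -⟩ := le_absv_iff.1 hy
  refine le_absv_iff.2 ⟨le_ldiv_iff.2 ?_, ?_, mul_le_one' hr1 hr1⟩
  · calc x * (r * r) = x * r * r := (mul_assoc x r r).symm
      _ ≤ r := mul_le_of_le_one_left' (hec.mul_le_one_comm.1 hrx1)
      _ ≤ y := hry
  · calc r * r * ldiv x y = r * (r * ldiv x y) := mul_assoc r r _
      _ ≤ r * (x * ldiv x y) := mul_le_mul_right (mul_le_mul_left hrx _) r
      _ ≤ r * y := mul_le_mul_right (le_ldiv_iff.1 le_rfl) r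
      _ ≤ 1 := hry1

lemma mul_self_le_absv_rdiv (hec : ECyclic α) : r * r ≤ absv (rdiv x y) := by
  obtain ⟨hrx, hrx1, hr1⟩ := le_absv_iff.1 hx
  obtain ⟨hry, hry1, -⟩ := le_absv_iff.1 hy
  refine le_absv_iff.2 ⟨le_rdiv_iff.2 ?_, hec.mul_le_one_comm.1 ?_, mul_le_one' hr1 hr1⟩
  · calc r * r * y = r * (r * y) := mul_assoc r r y
      _ ≤ r := mul_le_of_le_one_right' hry1
      _ ≤ x := hrx
  · calc rdiv x y * (r * r) = rdiv x y * r * r := (mul_assoc _ r r).symm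
      _ ≤ rdiv x y * y * r := mul_le_mul_left (mul_le_mul_right hry _) r
      _ ≤ x * r := mul_le_mul_left (le_rdiv_iff.1 le_rfl) r
      _ ≤ 1 := hec.mul_le_one_comm.1 hrx1

end CommonLowerBound

namespace IsConvexSubalgebra

variable {K : Set α} (hK : IsConvexSubalgebra K)
include hK

lemma mem_of_le_of_le_one {y z : α} (hy : y ∈ K) (hyz : y ≤ z) (hz : z ≤ 1) : z ∈ K :=
  hK.convex hy hK.one_mem hyz hz

lemma absv_mem {x : α} (hx : x ∈ K) : absv x ∈ K :=
  hK.inf_mem (hK.inf_mem hx (hK.rdiv_mem hK.one_mem hx)) hK.one_mem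

lemma mem_of_absv_mem {x : α} (hx : absv x ∈ K) : x ∈ K :=
  hK.convex hx (hK.ldiv_mem hx hK.one_mem) (absv_le_self x) (le_ldiv_iff.2 (absv_mul_le_one x))

lemma absv_sup_mem_of_left {x : α} (hx : x ∈ K) (y : α) : absv x ⊔ absv y ∈ K :=
  hK.mem_of_le_of_le_one (hK.absv_mem hx) le_sup_left (sup_le (absv_le_one x) (absv_le_one y))

lemma absv_sup_mem_of_right (x : α) {y : α} (hy : y ∈ K) : absv x ⊔ absv y ∈ K :=
  sup_comm (absv y) (absv x) ▸ hK.absv_sup_mem_of_left hy x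

def toSubmonoid : Submonoid α where
  carrier := K
  mul_mem' hx hy := hK.mul_mem hx hy
  one_mem' := hK.one_mem

omit hK

lemma singleton_one : IsConvexSubalgebra ({1} : Set α) := by
  have hldiv : ldiv (1 : α) 1 = 1 :=
    le_antisymm (by simpa using le_ldiv_iff.1 (le_refl (ldiv (1 : α) 1)))
      (le_ldiv_iff.2 (mul_one 1).le)
  have hrdiv : rdiv (1 : α) 1 = 1 :=
    le_antisymm (by simpa using le_rdiv_iff.1 (le_refl (rdiv (1 : α) 1)))
      (le_rdiv_iff.2 (mul_one 1).le)
  refine ⟨rfl, ?_, ?_, ?_, ?_, ?_, ?_⟩ <;> rintro _ rfl _ rfl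
  all_goals simp_all [le_antisymm_iff]

lemma sInter {𝒦 : Set (Set α)} (h : ∀ K ∈ 𝒦, IsConvexSubalgebra K) :
    IsConvexSubalgebra (⋂₀ 𝒦) where
  one_mem K hK := (h K hK).one_mem
  mul_mem _ hx _ hy K hK := (h K hK).mul_mem (hx K hK) (hy K hK)
  sup_mem _ hx _ hy K hK := (h K hK).sup_mem (hx K hK) (hy K hK)
  inf_mem _ hx _ hy K hK := (h K hK).inf_mem (hx K hK) (hy K hK)
  ldiv_mem _ hx _ hy K hK := (h K hK).ldiv_mem (hx K hK) (hy K hK)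
  rdiv_mem _ hx _ hy K hK := (h K hK).rdiv_mem (hx K hK) (hy K hK)
  convex _ ha _ hb _ hax hxb K hK := (h K hK).convex (ha K hK) (hb K hK) hax hxb

lemma sUnion_of_isChain {𝒦 : Set (Set α)} (hch : IsChain (· ⊆ ·) 𝒦) (hne : 𝒦.Nonempty)
    (h : ∀ K ∈ 𝒦, IsConvexSubalgebra K) : IsConvexSubalgebra (⋃₀ 𝒦) := by
  have pair {x y : α} (hx : x ∈ ⋃₀ 𝒦) (hy : y ∈ ⋃₀ 𝒦) : ∃ K ∈ 𝒦, x ∈ K ∧ y ∈ K := by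
    obtain ⟨A, hA, hxA⟩ := hx
    obtain ⟨B, hB, hyB⟩ := hy
    rcases hch.total hA hB with hAB | hBA
    exacts [⟨B, hB, hAB hxA, hyB⟩, ⟨A, hA, hxA, hBA hyB⟩]
  obtain ⟨K₀, hK₀⟩ := hne
  refine ⟨⟨K₀, hK₀, (h K₀ hK₀).one_mem⟩, ?_, ?_, ?_, ?_, ?_, ?_⟩
  all_goals
    intro x hx y hy
    obtain ⟨K, hK, hxK, hyK⟩ := pair hx hy
  · exact ⟨K, hK, (h K hK).mul_mem hxK hyK⟩
  · exact ⟨K, hK, (h K hK).sup_mem hxK hyK⟩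
  · exact ⟨K, hK, (h K hK).inf_mem hxK hyK⟩
  · exact ⟨K, hK, (h K hK).ldiv_mem hxK hyK⟩
  · exact ⟨K, hK, (h K hK).rdiv_mem hxK hyK⟩
  · exact fun z hxz hzy => ⟨K, hK, (h K hK).convex hxK hyK hxz hzy⟩

end IsConvexSubalgebra

lemma isConvexSubalgebra_convexClosure (S : Set α) : IsConvexSubalgebra (convexClosure S) :=
  IsConvexSubalgebra.sInter fun _ hK => hK.1

lemma subset_convexClosure (S : Set α) : S ⊆ convexClosure S :=
  fun _ hx _ hK => hK.2 hx

lemma convexClosure_subset {S K : Set α} (hK : IsConvexSubalgebra K) (hS : S ⊆ K) :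
    convexClosure S ⊆ K :=
  Set.sInter_subset_of_mem ⟨hK, hS⟩

open Submonoid

lemma le_one_of_mem_closure {A : Set α} (hA : ∀ a ∈ A, a ≤ 1) {c : α} (hc : c ∈ closure A) :
    c ≤ 1 :=
  closure_induction hA le_rfl (fun _ _ _ _ => mul_le_one') hc

lemma absv_image_le_one (S : Set α) : ∀ s ∈ absv '' S, s ≤ 1 :=
  Set.forall_mem_image.2 fun s _ => absv_le_one s

def absDominated (S : Set α) : Set α :=
  {x | ∃ c ∈ closure (absv '' S), c ≤ absv x}

lemma exists_le_absv_of_mem_absDominated {S : Set α} {x y : α} (hx : x ∈ absDominated S)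
    (hy : y ∈ absDominated S) : ∃ r ∈ closure (absv '' S), r ≤ absv x ∧ r ≤ absv y := by
  obtain ⟨c, hc, hcx⟩ := hx
  obtain ⟨d, hd, hdy⟩ := hy
  have hneg {c : α} (hc : c ∈ closure (absv '' S)) : c ≤ 1 :=
    le_one_of_mem_closure (absv_image_le_one S) hc
  exact ⟨c * d, mul_mem hc hd, (mul_le_of_le_one_right' (hneg hd)).trans hcx,
    (mul_le_of_le_one_left' (hneg hc)).trans hdy⟩

lemma isConvexSubalgebra_absDominated (hec : ECyclic α) (S : Set α) :
    IsConvexSubalgebra (absDominated S) := by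
  refine ⟨⟨1, one_mem _, one_le_absv_one⟩, ?_, ?_, ?_, ?_, ?_, ?_⟩
  all_goals
    intro x hx y hy
    obtain ⟨r, hr, hrx, hry⟩ := exists_le_absv_of_mem_absDominated hx hy
  · exact ⟨r * r, mul_mem hr hr, mul_self_le_absv_mul hrx hry⟩
  · exact ⟨r, hr, le_absv_sup hrx hry⟩
  · exact ⟨r, hr, le_absv_inf hrx hry⟩
  · exact ⟨r * r, mul_mem hr hr, mul_self_le_absv_ldiv hrx hry hec⟩
  · exact ⟨r * r, mul_mem hr hr, mul_self_le_absv_rdiv hrx hry hec⟩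
  · exact fun z hxz hzy => ⟨r, hr, le_absv_of_le_of_le hrx hry hxz hzy⟩

lemma convexClosure_subset_absDominated (hec : ECyclic α) (S : Set α) :
    convexClosure S ⊆ absDominated S :=
  convexClosure_subset (isConvexSubalgebra_absDominated hec S)
    fun s hs => ⟨absv s, subset_closure ⟨s, hs, rfl⟩, le_rfl⟩

lemma exists_mem_closure_image2_sup_le {A B : Set α} (hA : ∀ a ∈ A, a ≤ 1)
    (hB : ∀ b ∈ B, b ≤ 1) {c d : α} (hc : c ∈ closure A) (hd : d ∈ closure B) :
    ∃ e ∈ closure (Set.image2 (· ⊔ ·) A B), e ≤ c ⊔ d := by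
  induction hc using closure_induction with
  | mem a ha =>
    induction hd using closure_induction with
    | mem b hb => exact ⟨a ⊔ b, subset_closure (Set.mem_image2_of_mem ha hb), le_rfl⟩
    | one => exact ⟨1, one_mem _, le_sup_right⟩
    | mul d₁ d₂ hd₁ hd₂ ih₁ ih₂ =>
      obtain ⟨e₁, he₁, h₁⟩ := ih₁
      obtain ⟨e₂, he₂, h₂⟩ := ih₂
      refine ⟨e₁ * e₂, mul_mem he₁ he₂, (mul_le_mul' h₁ h₂).trans ?_⟩
      simpa only [sup_comm a] using sup_mul_sup_le (le_one_of_mem_closure hB hd₁)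
        (le_one_of_mem_closure hB hd₂) (hA a ha)
  | one => exact ⟨1, one_mem _, le_sup_left⟩
  | mul c₁ c₂ hc₁ hc₂ ih₁ ih₂ =>
    obtain ⟨e₁, he₁, h₁⟩ := ih₁
    obtain ⟨e₂, he₂, h₂⟩ := ih₂
    exact ⟨e₁ * e₂, mul_mem he₁ he₂, (mul_le_mul' h₁ h₂).trans (sup_mul_sup_le
      (le_one_of_mem_closure hA hc₁) (le_one_of_mem_closure hA hc₂) (le_one_of_mem_closure hB hd))⟩

lemma convexClosure_inter_subset (hec : ECyclic α) {A B K : Set α} (hK : IsConvexSubalgebra K)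
    (h : ∀ a ∈ A, ∀ b ∈ B, absv a ⊔ absv b ∈ K) : convexClosure A ∩ convexClosure B ⊆ K := by
  rintro x ⟨hxA, hxB⟩
  obtain ⟨c, hc, hcx⟩ := convexClosure_subset_absDominated hec A hxA
  obtain ⟨d, hd, hdx⟩ := convexClosure_subset_absDominated hec B hxB
  obtain ⟨e, he, hecd⟩ :=
    exists_mem_closure_image2_sup_le (absv_image_le_one A) (absv_image_le_one B) hc hd
  have heK : e ∈ K := closure_le (S := hK.toSubmonoid).2
    (by rintro _ ⟨_, ⟨a, ha, rfl⟩, _, ⟨b, hb, rfl⟩, rfl⟩; exact h a ha b hb) he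
  exact hK.mem_of_absv_mem (hK.mem_of_le_of_le_one heK (hecd.trans (sup_le hcx hdx)) (absv_le_one x))

end ResiduatedLattice

namespace IsPrimeConvex

variable {α : Type u} [ResiduatedLattice α]

lemma mem_or_mem_of_absv_sup_eq_one (hec : ECyclic α) {P : Set α} (hP : IsPrimeConvex P)
    {a b : α} (hab : absv a ⊔ absv b = 1) : a ∈ P ∨ b ∈ P := by
  have hsub : convexClosure {a} ∩ convexClosure {b} ⊆ P :=
    convexClosure_inter_subset hec hP.1 (by rintro _ rfl _ rfl; exact hab ▸ hP.1.one_mem)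
  exact (hP.2 _ _ (isConvexSubalgebra_convexClosure _) (isConvexSubalgebra_convexClosure _)
    hsub).imp (· (subset_convexClosure _ rfl)) (· (subset_convexClosure _ rfl))

lemma polar_subset (hec : ECyclic α) {P H : Set α} (hP : IsPrimeConvex P) (hHP : ¬ H ⊆ P) :
    polar H ⊆ P := by
  obtain ⟨h, hh, hhP⟩ := Set.not_subset.1 hHP
  exact fun a ha => (hP.mem_or_mem_of_absv_sup_eq_one hec (ha h hh)).resolve_right hhP

lemma of_maximal (hec : ECyclic α) {M : Set α} {c : α}
    (hM : Maximal (· ∈ {K : Set α | IsConvexSubalgebra K ∧ c ∉ K}) M) : IsPrimeConvex M := by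
  obtain ⟨⟨hMc, hcM⟩, hmax⟩ := hM
  refine ⟨hMc, fun X Y hX hY hXY => ?_⟩
  by_contra! hXYM
  obtain ⟨⟨x, hxX, hxM⟩, ⟨y, hyY, hyM⟩⟩ := And.intro (Set.not_subset.1 hXYM.1)
    (Set.not_subset.1 hXYM.2)
  have hc_mem {z : α} (hz : z ∉ M) : c ∈ convexClosure (insert z M) := by
    by_contra hcz
    exact hz (hmax ⟨isConvexSubalgebra_convexClosure _, hcz⟩
      ((Set.subset_insert z M).trans (subset_convexClosure _))
      (subset_convexClosure _ (Set.mem_insert z M)))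
  refine hcM (convexClosure_inter_subset hec hMc ?_ ⟨hc_mem hxM, hc_mem hyM⟩)
  rintro a (rfl | ha) b (rfl | hb)
  · exact hXY ⟨hX.absv_sup_mem_of_left hxX _, hY.absv_sup_mem_of_right _ hyY⟩
  · exact hMc.absv_sup_mem_of_right _ hb
  all_goals exact hMc.absv_sup_mem_of_left ha _

lemma sInter_of_isChain {𝒬 : Set (Set α)} (hch : IsChain (· ⊆ ·) 𝒬)
    (h : ∀ P ∈ 𝒬, IsPrimeConvex P) : IsPrimeConvex (⋂₀ 𝒬) := by
  refine ⟨IsConvexSubalgebra.sInter fun P hP => (h P hP).1, fun X Y hX hY hXY => ?_⟩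
  by_contra! hXY𝒬
  obtain ⟨x, hxX, hx𝒬⟩ := Set.not_subset.1 hXY𝒬.1
  obtain ⟨y, hyY, hy𝒬⟩ := Set.not_subset.1 hXY𝒬.2
  obtain ⟨A, hA, hxA⟩ : ∃ A ∈ 𝒬, x ∉ A := by simpa using hx𝒬
  obtain ⟨B, hB, hyB⟩ : ∃ B ∈ 𝒬, y ∉ B := by simpa using hy𝒬
  obtain ⟨P, hP, hxP, hyP⟩ : ∃ P ∈ 𝒬, x ∉ P ∧ y ∉ P := by
    rcases hch.total hA hB with hAB | hBA
    exacts [⟨A, hA, hxA, fun hyA => hyB (hAB hyA)⟩, ⟨B, hB, fun hxB => hxA (hBA hxB), hyB⟩]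
  rcases (h P hP).2 X Y hX hY (hXY.trans (Set.sInter_subset_of_mem hP)) with hXP | hYP
  exacts [hxP (hXP hxX), hyP (hYP hyY)]

end IsPrimeConvex

section MinimalPrimes

open ResiduatedLattice

variable {α : Type u} [ResiduatedLattice α]

lemma exists_isPrimeConvex_not_mem (hec : ECyclic α) {c : α} (hc : c ≠ 1) :
    ∃ M : Set α, IsPrimeConvex M ∧ c ∉ M := by
  obtain ⟨M, -, hM⟩ := zorn_subset_nonempty {K : Set α | IsConvexSubalgebra K ∧ c ∉ K}
    (fun 𝒦 h𝒦 hch hne => ⟨⋃₀ 𝒦,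
      ⟨IsConvexSubalgebra.sUnion_of_isChain hch hne fun K hK => (h𝒦 hK).1,
        fun ⟨K, hK, hcK⟩ => (h𝒦 hK).2 hcK⟩,
      fun _ => Set.subset_sUnion_of_mem⟩)
    {1} ⟨IsConvexSubalgebra.singleton_one, hc⟩
  exact ⟨M, IsPrimeConvex.of_maximal hec hM, hM.prop.2⟩

lemma exists_isMinimalPrimeConvex_not_mem (hec : ECyclic α) {c : α} (hc : c ≠ 1) :
    ∃ P : Set α, IsMinimalPrimeConvex P ∧ c ∉ P := by
  obtain ⟨M, hM, hcM⟩ := exists_isPrimeConvex_not_mem hec hc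
  obtain ⟨P, -, ⟨hP, hcP⟩, hmin⟩ := zorn_superset_nonempty {Q : Set α | IsPrimeConvex Q ∧ c ∉ Q}
    (fun 𝒬 h𝒬 hch ⟨Q, hQ⟩ => ⟨⋂₀ 𝒬,
      ⟨IsPrimeConvex.sInter_of_isChain hch fun P hP => (h𝒬 hP).1,
        fun hc𝒬 => (h𝒬 hQ).2 (hc𝒬 Q hQ)⟩,
      fun _ => Set.sInter_subset_of_mem⟩)
    M ⟨hM, hcM⟩
  refine ⟨P, ⟨hP, fun hP' => hcP (hP' ▸ Set.mem_univ c), fun Q hQ _ hQP => ?_⟩, hcP⟩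
  exact hQP.antisymm (hmin ⟨hQ, fun hcQ => hcP (hQP hcQ)⟩ hQP)

lemma mem_polar_of_forall_isMinimalPrimeConvex (hec : ECyclic α) {H : Set α} {a : α}
    (ha : ∀ P, IsMinimalPrimeConvex P → ¬ H ⊆ P → a ∈ P) : a ∈ polar H := by
  intro h hh
  by_contra hne
  obtain ⟨P, hP, hcP⟩ := exists_isMinimalPrimeConvex_not_mem hec hne
  have hHP : ¬ H ⊆ P := fun hHP => hcP (hP.1.1.absv_sup_mem_of_right a (hHP hh))
  exact hcP (hP.1.1.absv_sup_mem_of_left (ha P hP hHP) h)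

end MinimalPrimes

theorem stmt13_general {α : Type u} [ResiduatedLattice α] (hec : ECyclic α)
    (H : Set α) :
    polar H = ⋂₀ {P : Set α | IsMinimalPrimeConvex P ∧ ¬ H ⊆ P} :=
  Set.Subset.antisymm
    (fun _ ha => Set.mem_sInter.2 fun _ ⟨hP, hHP⟩ => hP.1.polar_subset hec hHP ha)
    (fun _ ha => mem_polar_of_forall_isMinimalPrimeConvex hec fun P hP hHP => ha P ⟨hP, hHP⟩)

/-- `H^⊥` is the intersection of the minimal primes not containing `H`. -/
theorem stmt13 {α : Type u} [ResiduatedLattice α] (hec : ECyclic α)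
    (H : Set α) (hH : IsConvexSubalgebra H) :
    polar H = ⋂₀ {P : Set α | IsMinimalPrimeConvex P ∧ ¬ H ⊆ P} :=
  stmt13_general hec H
end

section
/- Let L be a residuated lattice. For u, x ∈ L define λ_u(x) = (u\(x·u)) ∧ e, ρ_u(x) = ((u·x)/u) ∧ e, λ*_u(x) = ((x\u)\u) ∧ e, and ρ*_u(x) = (u/(u/x)) ∧ e. Then for all x, y ∈ L: (λ_u(x) ∨ ρ_v(y) = e for all u, v ∈ L) if and only if (λ*_u(x) ∨ ρ*_v(y) = e for all u, v ∈ L). In particular, the inequalities λ*_{x·u}(x) ≤ λ_u(x), λ_{x\u}(x) ≤ λ*_u(x), ρ*_{u·x}(x) ≤ ρ_u(x), and ρ_{u/x}(x) ≤ ρ*_u(x) hold in every residuated lattice. -/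
universe u

open ResiduatedLattice

/-- Left conjugation `λ_u(x) = (u\(x·u)) ⊓ e`. -/
def lam {α : Type u} [ResiduatedLattice α] (u x : α) : α := ldiv u (x * u) ⊓ 1

/-- Right conjugation `ρ_u(x) = ((u·x)/u) ⊓ e`. -/
def rho {α : Type u} [ResiduatedLattice α] (u x : α) : α := rdiv (u * x) u ⊓ 1

/-- `λ*_u(x) = ((x\u)\u) ⊓ e`. -/
def lamStar {α : Type u} [ResiduatedLattice α] (u x : α) : α := ldiv (ldiv x u) u ⊓ 1

/-- `ρ*_u(x) = (u/(u/x)) ⊓ e`. -/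
def rhoStar {α : Type u} [ResiduatedLattice α] (u x : α) : α := rdiv u (rdiv u x) ⊓ 1

/-
The residuation units `u ≤ x \ (x·u)` and `x·(x \ u) ≤ u`, pushed through the residuals
(antitone in the denominator, monotone in the numerator), give the four comparisons. As every
conjugate lies below `e`, a join equal to `e` on the smaller side forces the same on the larger
one; the parameters `x·u` and `x \ u` (resp. `v·y` and `v / y`) transfer the condition each way.
-/

namespace ResiduatedLattice

variable {α : Type u} [ResiduatedLattice α]

instance toMulLeftMono : MulLeftMono α where
  elim t a b h := (mul_le_iff_le_ldiv t a (t * b)).mpr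
    (h.trans ((mul_le_iff_le_ldiv t b (t * b)).mp le_rfl))

instance toMulRightMono : MulRightMono α where
  elim t a b h := (mul_le_iff_le_rdiv a t (b * t)).mpr
    (h.trans ((mul_le_iff_le_rdiv b t (b * t)).mp le_rfl))

lemma mul_ldiv_le (x z : α) : x * ldiv x z ≤ z :=
  (mul_le_iff_le_ldiv x (ldiv x z) z).mpr le_rfl

lemma rdiv_mul_le (z y : α) : rdiv z y * y ≤ z :=
  (mul_le_iff_le_rdiv (rdiv z y) y z).mpr le_rfl

lemma le_ldiv_mul (x u : α) : u ≤ ldiv x (x * u) :=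
  (mul_le_iff_le_ldiv x u (x * u)).mp le_rfl

lemma le_rdiv_mul (u x : α) : u ≤ rdiv (u * x) x :=
  (mul_le_iff_le_rdiv u x (u * x)).mp le_rfl

lemma ldiv_mono_right (c : α) : Monotone (ldiv c) := fun _ b h =>
  (mul_le_iff_le_ldiv c _ b).mp ((mul_ldiv_le c _).trans h)

lemma ldiv_anti_left (c : α) : Antitone (ldiv · c) := fun a _ h =>
  (mul_le_iff_le_ldiv a _ c).mp ((mul_le_mul_left h _).trans (mul_ldiv_le _ c))

lemma rdiv_mono_left (c : α) : Monotone (rdiv · c) := fun _ b h =>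
  (mul_le_iff_le_rdiv _ c b).mp ((rdiv_mul_le _ c).trans h)

lemma rdiv_anti_right (c : α) : Antitone (rdiv c) := fun a _ h =>
  (mul_le_iff_le_rdiv _ a c).mp ((mul_le_mul_right h _).trans (rdiv_mul_le c _))

end ResiduatedLattice

lemma sup_eq_of_sup_eq_of_le {β : Type*} [Lattice β] {a b a' b' e : β} (ha : a ≤ e) (hb : b ≤ e)
    (h : a' ⊔ b' = e) (ha' : a' ≤ a) (hb' : b' ≤ b) : a ⊔ b = e :=
  le_antisymm (sup_le ha hb) (h ▸ sup_le_sup ha' hb')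

section Conjugates

variable {α : Type u} [ResiduatedLattice α]

lemma lamStar_mul_le_lam (x u : α) : lamStar (x * u) x ≤ lam u x :=
  inf_le_inf_right 1 (ldiv_anti_left _ (le_ldiv_mul x u))

lemma lam_ldiv_le_lamStar (x u : α) : lam (ldiv x u) x ≤ lamStar u x :=
  inf_le_inf_right 1 (ldiv_mono_right _ (mul_ldiv_le x u))

lemma rhoStar_mul_le_rho (x u : α) : rhoStar (u * x) x ≤ rho u x :=
  inf_le_inf_right 1 (rdiv_anti_right _ (le_rdiv_mul u x))

lemma rho_rdiv_le_rhoStar (x u : α) : rho (rdiv u x) x ≤ rhoStar u x :=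
  inf_le_inf_right 1 (rdiv_mono_left _ (rdiv_mul_le u x))

lemma forall_lam_sup_rho_eq_one_iff (x y : α) :
    (∀ u v : α, lam u x ⊔ rho v y = 1) ↔ (∀ u v : α, lamStar u x ⊔ rhoStar v y = 1) :=
  ⟨fun h u v => sup_eq_of_sup_eq_of_le inf_le_right inf_le_right (h (ldiv x u) (rdiv v y))
      (lam_ldiv_le_lamStar x u) (rho_rdiv_le_rhoStar y v),
    fun h u v => sup_eq_of_sup_eq_of_le inf_le_right inf_le_right (h (x * u) (v * y))
      (lamStar_mul_le_lam x u) (rhoStar_mul_le_rho y v)⟩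

end Conjugates

/-- the condition `λ_u(x) ⊔ ρ_v(y) = e (∀ u, v)` is equivalent to
`λ*_u(x) ⊔ ρ*_v(y) = e (∀ u, v)`; and the four comparison inequalities between
conjugations and `*`-conjugations hold in every residuated lattice. -/
theorem stmt18 {α : Type u} [ResiduatedLattice α] :
    (∀ x y : α,
      (∀ u v : α, lam u x ⊔ rho v y = 1) ↔ (∀ u v : α, lamStar u x ⊔ rhoStar v y = 1)) ∧
    (∀ x u : α, lamStar (x * u) x ≤ lam u x) ∧
    (∀ x u : α, lam (ldiv x u) x ≤ lamStar u x) ∧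
    (∀ x u : α, rhoStar (u * x) x ≤ rho u x) ∧
    (∀ x u : α, rho (rdiv u x) x ≤ rhoStar u x) :=
  ⟨forall_lam_sup_rho_eq_one_iff, lamStar_mul_le_lam, lam_ldiv_le_lamStar, rhoStar_mul_le_rho,
    rho_rdiv_le_rhoStar⟩
end
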